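/- arXiv:2001.03096 — 6 statements merged into one kernel-verified Lean document; each statement's English description precedes it below -/
import Mathlib

section
/- u^n is a stationary distribution of the threshold-n Markov chain: for every state j ∈ {1,…,L}, u^n(j) = Σ_{i=1}^{L} u^n(i)·P(i,j). -/
/-!
Up to the normalising constant `n * p + 1 - p`, the stationary vector has weight `p` on the
deterministic states `1, …, n` and decays geometrically by the factor `1 - p` beyond `n`, the last
state carrying the whole geometric tail `(1 - p) ^ (L - n)`. Every state `j ≥ 2` is entered only
from `j - 1` (and `L` also from itself), so balance there is one step of the geometric decay.
State `1` is entered with probability `p` from each of the states `n, …, L`, whose weights add up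
to `1` by the geometric sum `∑_{k < m} (1 - p) ^ k * p + (1 - p) ^ m = 1`.
-/

open Finset

namespace ThresholdChain

def kernel (p : ℝ) (L n i j : ℕ) : ℝ :=
  if i < n then (if j = i + 1 then 1 else 0)
  else (if j = 1 then p else if j = min (i + 1) L then 1 - p else 0)

/-- For `i ≤ n` the truncated exponent `i - n` is `0`, which gives the constant weight `p` of the
deterministic states. -/
def weight (p : ℝ) (L n i : ℕ) : ℝ :=
  if i < L then (1 - p) ^ (i - n) * p else (1 - p) ^ (L - n)

variable {p : ℝ} {L n : ℕ}

lemma sum_weight_Icc (hnL : n ≤ L) : ∑ i ∈ Icc n L, weight p L n i = 1 := by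
  rw [← Ico_insert_right hnL, sum_insert (by simp), sum_Ico_eq_sum_range]
  have hgeom : ∑ k ∈ range (L - n), weight p L n (n + k) = 1 - (1 - p) ^ (L - n) := by
    rw [← mul_neg_geom_sum, mul_sum]
    refine sum_congr rfl fun k hk => ?_
    rw [mem_range] at hk
    simp only [weight, if_pos (show n + k < L by omega), Nat.add_sub_cancel_left]
    ring
  rw [hgeom, weight, if_neg (lt_irrefl L)]
  ring

lemma kernel_to_one {i : ℕ} (hi : 1 ≤ i) : kernel p L n i 1 = if n ≤ i then p else 0 := by
  unfold kernel
  split_ifs <;> first | rfl | omega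

lemma kernel_of_two_le {i j : ℕ} (hnL : n ≤ L) (hiL : i ≤ L) (hj : 2 ≤ j) (hjL : j ≤ L) :
    kernel p L n i j =
      (if i = j - 1 then (if i < n then 1 else 1 - p) else 0) +
        (if i = L then (if j = L then 1 - p else 0) else 0) := by
  unfold kernel
  split_ifs <;> first | (exfalso; omega) | simp

lemma weight_one_stationary (hL : 1 < L) (hn1 : 1 ≤ n) (hnL : n ≤ L) :
    weight p L n 1 = ∑ i ∈ Icc 1 L, weight p L n i * kernel p L n i 1 := by
  have hfilter : (Icc 1 L).filter (n ≤ ·) = Icc n L := by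
    ext i
    simp only [mem_filter, mem_Icc]
    omega
  rw [sum_congr rfl fun i hi => by rw [kernel_to_one (mem_Icc.mp hi).1, mul_ite, mul_zero],
    ← sum_filter, hfilter, ← sum_mul, sum_weight_Icc hnL, one_mul, weight, if_pos hL,
    Nat.sub_eq_zero_of_le hn1, pow_zero, one_mul]

lemma weight_stationary_of_two_le (hnL : n ≤ L) {j : ℕ} (hj : 2 ≤ j) (hjL : j ≤ L) :
    weight p L n j = ∑ i ∈ Icc 1 L, weight p L n i * kernel p L n i j := by
  have hkernel : ∀ i ∈ Icc 1 L, weight p L n i * kernel p L n i j =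
      (if i = j - 1 then weight p L n i * (if i < n then 1 else 1 - p) else 0) +
        (if i = L then weight p L n i * (if j = L then 1 - p else 0) else 0) := by
    intro i hi
    rw [kernel_of_two_le hnL (mem_Icc.mp hi).2 hj hjL]
    simp only [mul_add, mul_ite, mul_zero]
  rw [sum_congr rfl hkernel, sum_add_distrib, sum_ite_eq', sum_ite_eq',
    if_pos (mem_Icc.mpr ⟨by omega, by omega⟩), if_pos (mem_Icc.mpr ⟨by omega, le_rfl⟩)]
  obtain ⟨k, rfl⟩ : ∃ k, j = k + 1 := ⟨j - 1, by omega⟩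
  rw [Nat.add_sub_cancel]
  have hdecay : (1 - p) ^ (k + 1 - n) = (1 - p) ^ (k - n) * (if k < n then 1 else 1 - p) := by
    split_ifs with hkn
    · rw [Nat.sub_eq_zero_of_le hkn, Nat.sub_eq_zero_of_le hkn.le, pow_zero, mul_one]
    · rw [show k + 1 - n = k - n + 1 by omega, pow_succ]
  rcases hjL.lt_or_eq with hkL | rfl
  · rw [if_neg hkL.ne, mul_zero, add_zero]
    simp only [weight, if_pos hkL, if_pos (Nat.lt_of_succ_lt hkL), hdecay]
    ring
  · simp only [weight, if_pos (Nat.lt_succ_self k), lt_irrefl, if_false, if_true, hdecay]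
    ring

lemma weight_stationary (hL : 2 ≤ L) (hn1 : 1 ≤ n) (hnL : n ≤ L) {j : ℕ} (hj : j ∈ Icc 1 L) :
    weight p L n j = ∑ i ∈ Icc 1 L, weight p L n i * kernel p L n i j := by
  rw [mem_Icc] at hj
  obtain rfl | hj2 : j = 1 ∨ 2 ≤ j := by omega
  · exact weight_one_stationary hL hn1 hnL
  · exact weight_stationary_of_two_le hnL hj2 hj.2

lemma eq_weight_div {u : ℕ → ℝ} {c : ℝ}
    (hu1 : ∀ i : ℕ, 1 ≤ i → i ≤ n → i < L → u i = p / c)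
    (hu2 : ∀ i : ℕ, n < i → i < L → u i = (1 - p) ^ (i - n) * p / c)
    (hu3 : u L = (1 - p) ^ (L - n) / c) :
    ∀ i ∈ Icc 1 L, u i = weight p L n i / c := by
  intro i hi
  rw [mem_Icc] at hi
  unfold weight
  split_ifs with hiL
  · rcases le_or_gt i n with hin | hni
    · rw [hu1 i hi.1 hin hiL, Nat.sub_eq_zero_of_le hin, pow_zero, one_mul]
    · exact hu2 i hni hiL
  · rwa [show i = L by omega]

end ThresholdChain

open ThresholdChain in
theorem stmt1_general (p : ℝ) (L n : ℕ) (hL : 2 ≤ L)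
    (hn1 : 1 ≤ n) (hnL : n ≤ L) (u : ℕ → ℝ)
    (hu1 : ∀ i : ℕ, 1 ≤ i → i ≤ n → i < L → u i = p / ((n : ℝ) * p + 1 - p))
    (hu2 : ∀ i : ℕ, n < i → i < L →
      u i = (1 - p) ^ (i - n) * p / ((n : ℝ) * p + 1 - p))
    (hu3 : u L = (1 - p) ^ (L - n) / ((n : ℝ) * p + 1 - p))
    (P : ℕ → ℕ → ℝ)
    (hP : ∀ i ∈ Finset.Icc 1 L, ∀ j ∈ Finset.Icc 1 L,
      P i j = if i < n then (if j = i + 1 then 1 else 0)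
        else (if j = 1 then p else if j = min (i + 1) L then 1 - p else 0)) :
    ∀ j ∈ Finset.Icc 1 L, u j = ∑ i ∈ Finset.Icc 1 L, u i * P i j := by
  intro j hj
  have hu : ∀ i ∈ Icc 1 L, u i = weight p L n i / ((n : ℝ) * p + 1 - p) :=
    eq_weight_div hu1 hu2 hu3
  calc u j = weight p L n j / ((n : ℝ) * p + 1 - p) := hu j hj
    _ = (∑ i ∈ Icc 1 L, weight p L n i * kernel p L n i j) / ((n : ℝ) * p + 1 - p) := by
      rw [weight_stationary hL hn1 hnL hj]
    _ = ∑ i ∈ Icc 1 L, u i * P i j := by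
      rw [sum_div]
      refine sum_congr rfl fun i hi => ?_
      rw [hu i hi, hP i hi j hj, div_mul_eq_mul_div, kernel]

/-- Fix `p` with `0 < p < 1`, integers `L ≥ 2` and `1 ≤ n ≤ L`.
Let `u^n` be as in the paper, and let `P` be the transition kernel of the
threshold-`n` Markov chain on `{1,…,L}`: if `i < n` the chain moves from `i`
to `i+1` with probability `1`; if `i ≥ n` it moves to state `1` with
probability `p` and to `min(i+1,L)` with probability `1−p`; all other
transitions have probability `0`.  Then `u^n` is a stationary distribution:
for every state `j ∈ {1,…,L}`, `u^n(j) = Σ_{i=1}^{L} u^n(i)·P(i,j)`. -/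
theorem stmt1 (p : ℝ) (hp0 : 0 < p) (hp1 : p < 1) (L n : ℕ) (hL : 2 ≤ L)
    (hn1 : 1 ≤ n) (hnL : n ≤ L) (u : ℕ → ℝ)
    (hu1 : ∀ i : ℕ, 1 ≤ i → i ≤ n → i < L → u i = p / ((n : ℝ) * p + 1 - p))
    (hu2 : ∀ i : ℕ, n < i → i < L →
      u i = (1 - p) ^ (i - n) * p / ((n : ℝ) * p + 1 - p))
    (hu3 : u L = (1 - p) ^ (L - n) / ((n : ℝ) * p + 1 - p))
    (P : ℕ → ℕ → ℝ)
    (hP : ∀ i ∈ Finset.Icc 1 L, ∀ j ∈ Finset.Icc 1 L,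
      P i j = if i < n then (if j = i + 1 then 1 else 0)
        else (if j = 1 then p else if j = min (i + 1) L then 1 - p else 0)) :
    ∀ j ∈ Finset.Icc 1 L, u j = ∑ i ∈ Finset.Icc 1 L, u i * P i j :=
  stmt1_general p L n hL hn1 hnL u hu1 hu2 hu3 P hP
end

section
/- The stationary mean age under the threshold-n policy equals the closed form of Theorem 2: Σ_{i=1}^{L} i·u^n(i) = [((n−1)² + (n−1))p² + 2p(n−1) + 2(1 − (1−p)^{L−n+1})] / (2p((n−1)p + 1)). -/
/-!
Up to the factor `1 / D`, `D = n p + 1 - p`, the weights `u^n` put mass `p` on each of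
`1, …, n - 1` and are the law of `min (n + G, L)` from `n` on, with `G` geometric of parameter `p`.
The tail-sum formula gives `E [min (n + G, L)] = n + ∑_{j=1}^{L-n} (1-p)^j`, and the closed form
follows from Gauss' sum and the geometric sum.
-/

open Finset

theorem sum_Icc_one_eq_sum_range_add_sum_range_add {M : Type*} [AddCommMonoid M] (f : ℕ → M)
    (h0 : f 0 = 0) {n L : ℕ} (hnL : n ≤ L) :
    ∑ i ∈ Icc 1 L, f i = ∑ i ∈ range n, f i + ∑ j ∈ range (L - n), f (n + j) + f L := by
  rw [← sum_Ico_eq_sum_range, sum_range_add_sum_Ico _ hnL, ← sum_range_succ,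
    sum_range_eq_add_Ico _ (Nat.add_one_pos L), h0, zero_add, Ico_add_one_right_eq_Icc]

theorem sum_range_natCast_mul_two {R : Type*} [CommRing R] (n : ℕ) :
    (∑ i ∈ range n, (i : R)) * 2 = n * (n - 1) := by
  induction n with
  | zero => simp
  | succ k ih => rw [sum_range_succ, add_mul, ih]; push_cast; ring

/-- `E [min (m + G, m + k)]` for `G` geometric with `P (G = j) = (1 - q) q ^ j`, by the
tail-sum formula. -/
theorem sum_range_mul_geom_add_mul_pow {R : Type*} [CommRing R] (q : R) (m k : ℕ) :
    ∑ j ∈ range k, ((m + j : ℕ) : R) * ((1 - q) * q ^ j) + ((m + k : ℕ) : R) * q ^ k =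
      m + q * ∑ j ∈ range k, q ^ j := by
  induction k with
  | zero => simp
  | succ k ih =>
    rw [sum_range_succ, sum_range_succ]
    push_cast at ih ⊢
    linear_combination ih

theorem mul_sum_Icc_mul_eq_of_threshold {K : Type*} [Field K] {p D : K} (hD : D ≠ 0)
    {n k : ℕ} (hn1 : 1 ≤ n) (u : ℕ → K)
    (hu1 : ∀ i : ℕ, 1 ≤ i → i ≤ n → i < n + k → u i = p / D)
    (hu2 : ∀ i : ℕ, n < i → i < n + k → u i = (1 - p) ^ (i - n) * p / D)
    (hu3 : u (n + k) = (1 - p) ^ k / D) :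
    D * ∑ i ∈ Icc 1 (n + k), (i : K) * u i =
      p * ∑ i ∈ range n, (i : K) + (n + (1 - p) * ∑ j ∈ range k, (1 - p) ^ j) := by
  have head : D * ∑ i ∈ range n, (i : K) * u i = p * ∑ i ∈ range n, (i : K) := by
    rw [mul_sum, mul_sum]
    refine sum_congr rfl fun i hi => ?_
    have hi : i < n := mem_range.1 hi
    rcases Nat.eq_zero_or_pos i with rfl | hi0
    · simp
    · rw [hu1 i hi0 hi.le (by omega)]
      field_simp
  have block : D * ∑ j ∈ range k, ((n + j : ℕ) : K) * u (n + j) =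
      ∑ j ∈ range k, ((n + j : ℕ) : K) * ((1 - (1 - p)) * (1 - p) ^ j) := by
    rw [mul_sum]
    refine sum_congr rfl fun j hj => ?_
    have hj : j < k := mem_range.1 hj
    have hu : u (n + j) = (1 - p) ^ j * p / D := by
      rcases Nat.eq_zero_or_pos j with rfl | hj0
      · simpa using hu1 n hn1 le_rfl (by omega)
      · simpa using hu2 (n + j) (by omega) (by omega)
    rw [hu, sub_sub_cancel]
    field_simp
  have last : D * (((n + k : ℕ) : K) * u (n + k)) = ((n + k : ℕ) : K) * (1 - p) ^ k := by
    rw [hu3]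
    field_simp
  rw [sum_Icc_one_eq_sum_range_add_sum_range_add _ (by simp) (Nat.le_add_right n k),
    Nat.add_sub_cancel_left, mul_add, mul_add, head, block, last, add_assoc,
    sum_range_mul_geom_add_mul_pow]

theorem stmt2_general (p : ℝ) (hp0 : 0 < p) (L n : ℕ)
    (hn1 : 1 ≤ n) (hnL : n ≤ L) (u : ℕ → ℝ)
    (hu1 : ∀ i : ℕ, 1 ≤ i → i ≤ n → i < L → u i = p / ((n : ℝ) * p + 1 - p))
    (hu2 : ∀ i : ℕ, n < i → i < L →
      u i = (1 - p) ^ (i - n) * p / ((n : ℝ) * p + 1 - p))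
    (hu3 : u L = (1 - p) ^ (L - n) / ((n : ℝ) * p + 1 - p)) :
    ∑ i ∈ Finset.Icc 1 L, (i : ℝ) * u i =
      ((((n : ℝ) - 1) ^ 2 + ((n : ℝ) - 1)) * p ^ 2 + 2 * p * ((n : ℝ) - 1)
          + 2 * (1 - (1 - p) ^ (L - n + 1))) /
        (2 * p * (((n : ℝ) - 1) * p + 1)) := by
  obtain ⟨k, rfl⟩ := Nat.exists_eq_add_of_le hnL
  rw [Nat.add_sub_cancel_left] at hu3 ⊢
  have hD : 0 < (n : ℝ) * p + 1 - p := by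
    have : (1 : ℝ) ≤ n := by exact_mod_cast hn1
    nlinarith
  have hmean := mul_sum_Icc_mul_eq_of_threshold hD.ne' hn1 u hu1 hu2 hu3
  have hgauss := sum_range_natCast_mul_two (R := ℝ) n
  have hgeom := mul_neg_geom_sum (1 - p) k
  rw [pow_succ, eq_div_iff (by nlinarith)]
  linear_combination (2 * p) * hmean + p ^ 2 * hgauss + 2 * (1 - p) * hgeom

/-- With `p`, `L`, `n` and `u^n` as in the paper, the
stationary mean age under the threshold-`n` policy equals the closed form of
Theorem 2:
`Σ_{i=1}^{L} i·u^n(i)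
  = [((n−1)² + (n−1))p² + 2p(n−1) + 2(1 − (1−p)^{L−n+1})] / (2p((n−1)p + 1))`. -/
theorem stmt2 (p : ℝ) (hp0 : 0 < p) (hp1 : p < 1) (L n : ℕ) (hL : 2 ≤ L)
    (hn1 : 1 ≤ n) (hnL : n ≤ L) (u : ℕ → ℝ)
    (hu1 : ∀ i : ℕ, 1 ≤ i → i ≤ n → i < L → u i = p / ((n : ℝ) * p + 1 - p))
    (hu2 : ∀ i : ℕ, n < i → i < L →
      u i = (1 - p) ^ (i - n) * p / ((n : ℝ) * p + 1 - p))
    (hu3 : u L = (1 - p) ^ (L - n) / ((n : ℝ) * p + 1 - p)) :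
    ∑ i ∈ Finset.Icc 1 L, (i : ℝ) * u i =
      ((((n : ℝ) - 1) ^ 2 + ((n : ℝ) - 1)) * p ^ 2 + 2 * p * ((n : ℝ) - 1)
          + 2 * (1 - (1 - p) ^ (L - n + 1))) /
        (2 * p * (((n : ℝ) - 1) * p + 1)) :=
  stmt2_general p hp0 L n hn1 hnL u hu1 hu2 hu3
end

section
/- Indexability (Proposition 3 core): the stationary scheduling probability is strictly decreasing in the threshold, i.e., for all integers n, n' with 1 ≤ n < n' ≤ L, Σ_{i=n'}^{L} u^{n'}(i) < Σ_{i=n}^{L} u^n(i). -/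
/-! The vector `u^n` is the law of a geometric number of steps truncated at `L`, scaled by
`1 / (n p + 1 - p)`; its masses on `{n, …, L}` therefore sum to exactly `1 / (n p + 1 - p)`,
which is strictly decreasing in `n` since `p > 0`. -/

open Finset

lemma sum_range_geom_mul_add_pow_eq_one {K : Type*} [Ring K] (p : K) (m : ℕ) :
    ∑ k ∈ range m, (1 - p) ^ k * p + (1 - p) ^ m = 1 := by
  rw [← sum_mul, ← eq_sub_iff_add_eq, ← geom_sum_mul_neg, sub_sub_cancel]

lemma sum_Icc_eq_one_div_of_truncGeometric {K : Type*} [Field K] (p D : K) {n L : ℕ}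
    (hnL : n ≤ L) (v : ℕ → K)
    (hv : ∀ i, n ≤ i → i < L → v i = (1 - p) ^ (i - n) * p / D)
    (hvL : v L = (1 - p) ^ (L - n) / D) :
    ∑ i ∈ Icc n L, v i = 1 / D := by
  rw [← Ico_add_one_right_eq_Icc, sum_Ico_eq_sum_range, Nat.sub_add_comm hnL,
    sum_range_succ, Nat.add_sub_cancel' hnL, hvL]
  have hbulk : ∑ k ∈ range (L - n), v (n + k) = ∑ k ∈ range (L - n), (1 - p) ^ k * p / D :=
    sum_congr rfl fun k hk => by
      rw [hv _ (Nat.le_add_right n k) (by rw [mem_range] at hk; omega), Nat.add_sub_cancel_left]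
  rw [hbulk, ← sum_div, ← add_div, sum_range_geom_mul_add_pow_eq_one]

theorem stmt4_general (p : ℝ) (hp0 : 0 < p) (L : ℕ)
    (u : ℕ → ℕ → ℝ)
    (hu1 : ∀ n : ℕ, 1 ≤ n → n ≤ L → ∀ i : ℕ, 1 ≤ i → i ≤ n → i < L →
      u n i = p / ((n : ℝ) * p + 1 - p))
    (hu2 : ∀ n : ℕ, 1 ≤ n → n ≤ L → ∀ i : ℕ, n < i → i < L →
      u n i = (1 - p) ^ (i - n) * p / ((n : ℝ) * p + 1 - p))
    (hu3 : ∀ n : ℕ, 1 ≤ n → n ≤ L →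
      u n L = (1 - p) ^ (L - n) / ((n : ℝ) * p + 1 - p)) :
    ∀ n n' : ℕ, 1 ≤ n → n < n' → n' ≤ L →
      ∑ i ∈ Finset.Icc n' L, u n' i < ∑ i ∈ Finset.Icc n L, u n i := by
  have hsum : ∀ n, 1 ≤ n → n ≤ L → ∑ i ∈ Icc n L, u n i = 1 / ((n : ℝ) * p + 1 - p) := by
    intro n hn hnL
    refine sum_Icc_eq_one_div_of_truncGeometric p _ hnL (u n) (fun i hni hiL => ?_) (hu3 n hn hnL)
    rcases hni.eq_or_lt with rfl | hni
    · rw [hu1 n hn hnL n hn le_rfl hiL, Nat.sub_self, pow_zero, one_mul]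
    · exact hu2 n hn hnL i hni hiL
  intro n n' hn hnn' hn'L
  rw [hsum n hn (by omega), hsum n' (by omega) hn'L]
  have hn1 : (1 : ℝ) ≤ n := by exact_mod_cast hn
  have hnn'1 : (n : ℝ) < n' := by exact_mod_cast hnn'
  apply one_div_lt_one_div_of_lt (by nlinarith)
  nlinarith

/-- **Indexability, Proposition 3 core.** Fix `p` with
`0 < p < 1` and `L ≥ 2`.  For each threshold `1 ≤ n ≤ L`, let `u^n` be as in
the paper.  Then the stationary scheduling probability is strictly decreasing
in the threshold: for all integers `n, n'` with `1 ≤ n < n' ≤ L`,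
`Σ_{i=n'}^{L} u^{n'}(i) < Σ_{i=n}^{L} u^n(i)`. -/
theorem stmt4 (p : ℝ) (hp0 : 0 < p) (hp1 : p < 1) (L : ℕ) (hL : 2 ≤ L)
    (u : ℕ → ℕ → ℝ)
    (hu1 : ∀ n : ℕ, 1 ≤ n → n ≤ L → ∀ i : ℕ, 1 ≤ i → i ≤ n → i < L →
      u n i = p / ((n : ℝ) * p + 1 - p))
    (hu2 : ∀ n : ℕ, 1 ≤ n → n ≤ L → ∀ i : ℕ, n < i → i < L →
      u n i = (1 - p) ^ (i - n) * p / ((n : ℝ) * p + 1 - p))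
    (hu3 : ∀ n : ℕ, 1 ≤ n → n ≤ L →
      u n L = (1 - p) ^ (L - n) / ((n : ℝ) * p + 1 - p)) :
    ∀ n n' : ℕ, 1 ≤ n → n < n' → n' ≤ L →
      ∑ i ∈ Finset.Icc n' L, u n' i < ∑ i ∈ Finset.Icc n L, u n i :=
  stmt4_general p hp0 L u hu1 hu2 hu3
end

section
/- The Whittle index W_i makes thresholds i and i+1 cost-equivalent (Proposition 4): for every integer i with 1 ≤ i ≤ L−1, C̄(i, W_i) = C̄(i+1, W_i), where W_i := i(i−1)p/2 + i − i(1−p)^{L−i}; moreover, for i = L one has C̄(L, W_L) = L, which is the average cost of the never-schedule policy. -/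
/-!
With `d_n = n p + 1 - p`, the distribution `u^n` is `d_n⁻¹` times weights `w_n` whose tail
`Σ_{i=n}^{L} w_n(i)` is a geometric series summing to `1`, so `C̄(n, W) = (M_n + W) / d_n` with
`M_n = Σ i w_n(i)`. An arithmetico-geometric sum gives
`p M_n = p² n(n-1)/2 + p n + (1-p) - (1-p)^(L-n+1)`, after which both claims are polynomial
identities in `p`, `n` and a power of `1 - p` once the denominators are cleared.
-/

open Finset

lemma sum_range_natCast (m : ℕ) : ∑ k ∈ range m, (k : ℝ) = m * (m - 1) / 2 := by
  induction m with
  | zero => simp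
  | succ n ih => rw [sum_range_succ, ih]; push_cast; ring

lemma one_sub_sq_mul_sum_range_natCast_mul_pow (q : ℝ) (m : ℕ) :
    (1 - q) ^ 2 * ∑ k ∈ range m, (k : ℝ) * q ^ k = q - q ^ m * (q + m * (1 - q)) := by
  induction m with
  | zero => simp
  | succ n ih => rw [sum_range_succ, mul_add, ih, pow_succ]; push_cast; ring

/-- For `i ≤ n` the truncated subtraction makes `i - n = 0`, giving the constant weight `p`. -/
noncomputable def thresholdWeight (p : ℝ) (L n i : ℕ) : ℝ :=
  if i = L then (1 - p) ^ (L - n) else p * (1 - p) ^ (i - n)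

noncomputable def thresholdDist (p : ℝ) (L n i : ℕ) : ℝ :=
  thresholdWeight p L n i / (n * p + 1 - p)

noncomputable def thresholdCost (p : ℝ) (L n : ℕ) (W : ℝ) : ℝ :=
  (∑ i ∈ Icc 1 L, (i : ℝ) * thresholdDist p L n i)
    + W * ∑ i ∈ Icc n L, thresholdDist p L n i

noncomputable def whittleIndex (p : ℝ) (L i : ℕ) : ℝ :=
  i * (i - 1) * p / 2 + i - i * (1 - p) ^ (L - i)

section

variable {p : ℝ} {L n : ℕ}

lemma thresholdWeight_add_of_lt {k m : ℕ} (hk : k < m) :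
    thresholdWeight p (n + m) n (n + k) = p * (1 - p) ^ k := by
  simp [thresholdWeight, hk.ne]

lemma sum_thresholdWeight (hn : n ≤ L) : ∑ i ∈ Icc n L, thresholdWeight p L n i = 1 := by
  obtain ⟨m, rfl⟩ := Nat.exists_eq_add_of_le hn
  rw [← Ico_add_one_right_eq_Icc, sum_Ico_eq_sum_range, show n + m + 1 - n = m + 1 by omega,
    sum_range_succ, sum_congr rfl fun k hk => thresholdWeight_add_of_lt (mem_range.1 hk),
    ← mul_sum]
  have := mul_neg_geom_sum (1 - p) m
  rw [sub_sub_cancel] at this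
  simp only [thresholdWeight, if_true, Nat.add_sub_cancel_left]
  linarith

lemma mul_sum_natCast_mul_thresholdWeight (hn : n ≤ L) :
    p * ∑ i ∈ Icc 1 L, (i : ℝ) * thresholdWeight p L n i
      = p ^ 2 * n * (n - 1) / 2 + p * n + (1 - p) - (1 - p) ^ (L - n + 1) := by
  obtain ⟨m, rfl⟩ := Nat.exists_eq_add_of_le hn
  have hIcc : ∑ i ∈ Icc 1 (n + m), (i : ℝ) * thresholdWeight p (n + m) n i
      = ∑ i ∈ range (n + m + 1), (i : ℝ) * thresholdWeight p (n + m) n i := by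
    rw [range_eq_Ico, sum_eq_sum_Ico_succ_bot (by omega), Ico_add_one_right_eq_Icc]
    simp
  have hhead : ∀ i ∈ range n, (i : ℝ) * thresholdWeight p (n + m) n i = i * p := by
    intro i hi
    have : i < n := mem_range.1 hi
    simp [thresholdWeight, show i ≠ n + m by omega, Nat.sub_eq_zero_of_le this.le]
  have htail : ∀ k ∈ range m, ((n + k : ℕ) : ℝ) * thresholdWeight p (n + m) n (n + k)
      = p * n * (1 - p) ^ k + p * (k * (1 - p) ^ k) := by
    intro k hk
    rw [thresholdWeight_add_of_lt (mem_range.1 hk)]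
    push_cast
    ring
  rw [hIcc, sum_range_succ, sum_range_add, sum_congr rfl hhead, sum_congr rfl htail,
    ← sum_mul, sum_range_natCast, sum_add_distrib, ← mul_sum, ← mul_sum]
  have hgeom := mul_neg_geom_sum (1 - p) m
  have harith := one_sub_sq_mul_sum_range_natCast_mul_pow (1 - p) m
  rw [sub_sub_cancel] at hgeom harith
  simp only [thresholdWeight, Nat.add_sub_cancel_left]
  push_cast
  linear_combination n * p * hgeom + harith

lemma thresholdCost_eq (hn : n ≤ L) (W : ℝ) :
    thresholdCost p L n W
      = ((∑ i ∈ Icc 1 L, (i : ℝ) * thresholdWeight p L n i) + W) / (n * p + 1 - p) := by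
  simp only [thresholdCost, thresholdDist, mul_div_assoc', ← sum_div, sum_thresholdWeight hn]
  ring

lemma natCast_mul_add_one_sub_pos (hp : 0 ≤ p) (hn : 1 ≤ n) : 0 < (n : ℝ) * p + 1 - p := by
  have : (1 : ℝ) ≤ n := by exact_mod_cast hn
  nlinarith

lemma thresholdCost_whittleIndex_succ {i : ℕ} (hp : 0 < p) (hi : 1 ≤ i) (hiL : i + 1 ≤ L) :
    thresholdCost p L i (whittleIndex p L i) = thresholdCost p L (i + 1) (whittleIndex p L i) := by
  have hdi := natCast_mul_add_one_sub_pos hp.le hi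
  have hdi' := natCast_mul_add_one_sub_pos (n := i + 1) hp.le (by omega)
  rw [thresholdCost_eq (by omega), thresholdCost_eq hiL, div_eq_div_iff hdi.ne' hdi'.ne']
  refine mul_left_cancel₀ hp.ne' ?_
  have hSi := mul_sum_natCast_mul_thresholdWeight (p := p) (n := i) (by omega : i ≤ L)
  have hSi' := mul_sum_natCast_mul_thresholdWeight (p := p) hiL
  obtain ⟨j, rfl⟩ := Nat.exists_eq_add_of_le hiL
  simp only [whittleIndex, show i + 1 + j - i = j + 1 by omega, Nat.add_sub_cancel_left]
    at hSi hSi' ⊢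
  push_cast at hSi' ⊢
  linear_combination (((i : ℝ) + 1) * p + 1 - p) * hSi - ((i : ℝ) * p + 1 - p) * hSi'

lemma thresholdCost_whittleIndex_self (hp : 0 < p) (hL : 1 ≤ L) :
    thresholdCost p L L (whittleIndex p L L) = L := by
  have hd := natCast_mul_add_one_sub_pos hp.le hL
  rw [thresholdCost_eq le_rfl, div_eq_iff hd.ne']
  refine mul_left_cancel₀ hp.ne' ?_
  have hS := mul_sum_natCast_mul_thresholdWeight (p := p) (le_refl L)
  simp only [whittleIndex, Nat.sub_self, pow_zero, zero_add, pow_one] at hS ⊢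
  linear_combination hS

end

theorem stmt5_general (p : ℝ) (hp0 : 0 < p) (L : ℕ) (hL : 2 ≤ L)
    (u : ℕ → ℕ → ℝ)
    (hu1 : ∀ n : ℕ, 1 ≤ n → n ≤ L → ∀ i : ℕ, 1 ≤ i → i ≤ n → i < L →
      u n i = p / ((n : ℝ) * p + 1 - p))
    (hu2 : ∀ n : ℕ, 1 ≤ n → n ≤ L → ∀ i : ℕ, n < i → i < L →
      u n i = (1 - p) ^ (i - n) * p / ((n : ℝ) * p + 1 - p))
    (hu3 : ∀ n : ℕ, 1 ≤ n → n ≤ L →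
      u n L = (1 - p) ^ (L - n) / ((n : ℝ) * p + 1 - p))
    (C : ℕ → ℝ → ℝ)
    (hC : ∀ (n : ℕ) (W : ℝ),
      C n W = (∑ i ∈ Finset.Icc 1 L, (i : ℝ) * u n i)
        + W * ∑ i ∈ Finset.Icc n L, u n i)
    (Wh : ℕ → ℝ)
    (hWh : ∀ i : ℕ,
      Wh i = (i : ℝ) * ((i : ℝ) - 1) * p / 2 + (i : ℝ)
        - (i : ℝ) * (1 - p) ^ (L - i)) :
    (∀ i : ℕ, 1 ≤ i → i ≤ L - 1 → C i (Wh i) = C (i + 1) (Wh i)) ∧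
      C L (Wh L) = L := by
  have hu : ∀ n, 1 ≤ n → n ≤ L → ∀ i ∈ Icc 1 L, u n i = thresholdDist p L n i := by
    intro n hn hnL i hi
    obtain ⟨hi1, hiL⟩ := mem_Icc.1 hi
    rcases hiL.eq_or_lt with rfl | hiL
    · simp [thresholdDist, thresholdWeight, hu3 n hn hnL]
    rcases le_or_gt i n with hin | hni
    · simp [thresholdDist, thresholdWeight, hiL.ne, Nat.sub_eq_zero_of_le hin,
        hu1 n hn hnL i hi1 hin hiL]
    · simp [thresholdDist, thresholdWeight, hiL.ne, hu2 n hn hnL i hni hiL, mul_comm]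
  have hCost : ∀ n, 1 ≤ n → n ≤ L → ∀ W, C n W = thresholdCost p L n W := by
    intro n hn hnL W
    rw [hC, thresholdCost, sum_congr rfl fun i hi => congrArg _ (hu n hn hnL i hi),
      sum_congr rfl fun i hi => hu n hn hnL i (Icc_subset_Icc_left hn hi)]
  have hWh' : Wh = whittleIndex p L := funext hWh
  refine ⟨fun i hi hiL => ?_, ?_⟩
  · rw [hCost i hi (by omega), hCost (i + 1) (by omega) (by omega), hWh']
    exact thresholdCost_whittleIndex_succ hp0 hi (by omega)
  · rw [hCost L (by omega) le_rfl, hWh']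
    exact thresholdCost_whittleIndex_self hp0 (by omega)

/-- **Proposition 4.** Fix `p` with `0 < p < 1` and `L ≥ 2`.
For each threshold `1 ≤ n ≤ L`, let `u^n` be as in the paper, and for `W ≥ 0`
let `C̄(n, W) := Σ_{i=1}^{L} i·u^n(i) + W·Σ_{i=n}^{L} u^n(i)` be the average
cost of the threshold-`n` policy.  Then the Whittle index
`W_i := i(i−1)p/2 + i − i(1−p)^{L−i}` makes thresholds `i` and `i+1`
cost-equivalent: for every `1 ≤ i ≤ L−1`, `C̄(i, W_i) = C̄(i+1, W_i)`;
moreover `C̄(L, W_L) = L`, the average cost of the never-schedule policy. -/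
theorem stmt5 (p : ℝ) (hp0 : 0 < p) (hp1 : p < 1) (L : ℕ) (hL : 2 ≤ L)
    (u : ℕ → ℕ → ℝ)
    (hu1 : ∀ n : ℕ, 1 ≤ n → n ≤ L → ∀ i : ℕ, 1 ≤ i → i ≤ n → i < L →
      u n i = p / ((n : ℝ) * p + 1 - p))
    (hu2 : ∀ n : ℕ, 1 ≤ n → n ≤ L → ∀ i : ℕ, n < i → i < L →
      u n i = (1 - p) ^ (i - n) * p / ((n : ℝ) * p + 1 - p))
    (hu3 : ∀ n : ℕ, 1 ≤ n → n ≤ L →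
      u n L = (1 - p) ^ (L - n) / ((n : ℝ) * p + 1 - p))
    (C : ℕ → ℝ → ℝ)
    (hC : ∀ (n : ℕ) (W : ℝ),
      C n W = (∑ i ∈ Finset.Icc 1 L, (i : ℝ) * u n i)
        + W * ∑ i ∈ Finset.Icc n L, u n i)
    (Wh : ℕ → ℝ)
    (hWh : ∀ i : ℕ,
      Wh i = (i : ℝ) * ((i : ℝ) - 1) * p / 2 + (i : ℝ)
        - (i : ℝ) * (1 - p) ^ (L - i)) :
    (∀ i : ℕ, 1 ≤ i → i ≤ L - 1 → C i (Wh i) = C (i + 1) (Wh i)) ∧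
      C L (Wh L) = L :=
  stmt5_general p hp0 L hL u hu1 hu2 hu3 C hC Wh hWh
end

section
/- Monotonicity of the Whittle indices (Proposition 7): for every integer i with 1 ≤ i ≤ L−1, the difference of consecutive Whittle indices satisfies W_{i+1} − W_i = (ip + 1)·(1 − (1−p)^{L−i−1}), and in particular W_{i+1} − W_i ≥ 0, so the sequence (W_i)_{1 ≤ i ≤ L} is monotonically increasing. -/
/-- **Proposition 7.** Fix `p` with `0 < p < 1` and `L ≥ 2`, and
for each `1 ≤ i ≤ L` let `W_i := i(i−1)p/2 + i − i(1−p)^{L−i}` be the Whittle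
index.  Then for every `1 ≤ i ≤ L−1`,
`W_{i+1} − W_i = (ip + 1)·(1 − (1−p)^{L−i−1})`, in particular
`W_{i+1} − W_i ≥ 0`, so the sequence `(W_i)_{1 ≤ i ≤ L}` is monotonically
increasing. -/
theorem stmt6 (p : ℝ) (hp0 : 0 < p) (hp1 : p < 1) (L : ℕ) (hL : 2 ≤ L)
    (W : ℕ → ℝ)
    (hW : ∀ i : ℕ, 1 ≤ i → i ≤ L →
      W i = (i : ℝ) * ((i : ℝ) - 1) * p / 2 + (i : ℝ)
        - (i : ℝ) * (1 - p) ^ (L - i)) :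
    (∀ i : ℕ, 1 ≤ i → i ≤ L - 1 →
        W (i + 1) - W i = ((i : ℝ) * p + 1) * (1 - (1 - p) ^ (L - i - 1)) ∧
          0 ≤ W (i + 1) - W i) ∧
      (∀ i j : ℕ, 1 ≤ i → i ≤ j → j ≤ L → W i ≤ W j) := by
  have hq0 : 0 ≤ 1 - p := by linarith
  have hq1 : 1 - p ≤ 1 := by linarith
  have key : ∀ i : ℕ, 1 ≤ i → i ≤ L - 1 →
      W (i + 1) - W i = ((i : ℝ) * p + 1) * (1 - (1 - p) ^ (L - i - 1)) ∧
        0 ≤ W (i + 1) - W i := by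
    intro i hi1 hiL
    have hiL' : i + 1 ≤ L := by omega
    have hiL'' : i ≤ L := by omega
    have h1 := hW i hi1 hiL''
    have h2 := hW (i + 1) (by omega) hiL'
    have hpow : (1 - p) ^ (L - i) = (1 - p) * (1 - p) ^ (L - i - 1) := by
      have : L - i = (L - i - 1) + 1 := by omega
      conv_lhs => rw [this]
      rw [pow_succ]; ring
    have heq1 : L - (i + 1) = L - i - 1 := by omega
    have heq : W (i + 1) - W i = ((i : ℝ) * p + 1) * (1 - (1 - p) ^ (L - i - 1)) := by
      rw [h1, h2, heq1, hpow]
      push_cast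
      ring
    refine ⟨heq, ?_⟩
    rw [heq]
    have h3 : (1 - p) ^ (L - i - 1) ≤ 1 := pow_le_one₀ hq0 hq1
    have h4 : (0:ℝ) ≤ (i : ℝ) * p + 1 := by positivity
    nlinarith
  refine ⟨key, ?_⟩
  intro i j hi hij hjL
  induction j with
  | zero => omega
  | succ n ih =>
    rcases Nat.lt_or_ge i (n + 1) with h | h
    · have hn1 : 1 ≤ n := by omega
      have := (key n hn1 (by omega)).2
      have := ih (by omega) (by omega)
      linarith
    · have : i = n + 1 := by omega
      simp [this]
end

section
/- Every root of the polynomial λ^{l−1} + p·(λ^{l−2} + λ^{l−3} + ⋯ + λ + 1) lies strictly inside the unit disk: if λ ∈ ℂ satisfies λ^{l−1} + p·Σ_{i=0}^{l−2} λ^i = 0, then |λ| < 1. -/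
/-!
Multiplying by `λ - 1` turns `λⁿ + p (λⁿ⁻¹ + ⋯ + 1) = 0` into `λⁿ (λ - (1 - p)) = p`.
If `|λ| ≥ 1`, then `|λ - (1 - p)| ≥ |λ| - (1 - p) ≥ p`, so taking norms forces
`|λ - (1 - p)| = p`: the point `λ` lies outside the open unit disk and on the circle of centre
`1 - p` and radius `p`, which is internally tangent to the unit circle at `1`. Hence `λ = 1`,
which is not a root since `1 + n p > 0`.
-/

open Finset

theorem sub_one_mul_pow_add_mul_geom_sum {R : Type*} [CommRing R] (z c : R) (n : ℕ) :
    (z - 1) * (z ^ n + c * ∑ i ∈ range n, z ^ i) = z ^ n * (z - (1 - c)) - c := by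
  linear_combination c * mul_geom_sum z n

namespace Complex

theorem eq_one_of_one_le_norm_of_norm_sub_ofReal_le {z : ℂ} {c : ℝ} (hz : 1 ≤ ‖z‖) (hc : 0 < c)
    (h : ‖z - c‖ ≤ 1 - c) : z = 1 := by
  have sq_norm_eq (w : ℂ) : ‖w‖ ^ 2 = w.re ^ 2 + w.im ^ 2 := by
    rw [Complex.sq_norm, normSq_apply]; ring
  have hc1 : 0 ≤ 1 - c := (norm_nonneg _).trans h
  have hz' : 1 ≤ z.re ^ 2 + z.im ^ 2 := by nlinarith [sq_norm_eq z]
  have h' : (z.re - c) ^ 2 + z.im ^ 2 ≤ (1 - c) ^ 2 := by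
    simpa [sq_norm_eq] using pow_le_pow_left₀ (norm_nonneg _) h 2
  have hre : 1 ≤ z.re := by nlinarith
  have him : z.im = 0 := pow_eq_zero_iff two_ne_zero |>.mp (by nlinarith [sq_nonneg z.im])
  have hre' : z.re = 1 := by nlinarith
  exact ext (by rw [hre', one_re]) (by rw [him, one_im])

end Complex

theorem norm_lt_one_of_pow_add_mul_geom_sum_eq_zero {c : ℝ} (hc0 : 0 < c) (hc1 : c < 1)
    {z : ℂ} {n : ℕ} (h : z ^ n + c * ∑ i ∈ range n, z ^ i = 0) : ‖z‖ < 1 := by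
  by_contra! hz
  have hz1 : z ≠ 1 := by
    rintro rfl
    have : ((1 + c * n : ℝ) : ℂ) = 0 := by simpa using h
    norm_cast at this
    nlinarith [n.cast_nonneg (α := ℝ)]
  have hroot : z ^ n * (z - (1 - c : ℝ)) = c := by
    push_cast
    linear_combination (z - 1) * h - sub_one_mul_pow_add_mul_geom_sum z c n
  have hnorm : ‖z‖ ^ n * ‖z - (1 - c : ℝ)‖ = c := by
    simpa [norm_pow, abs_of_pos hc0] using congrArg norm hroot
  have hnear : ‖z - (1 - c : ℝ)‖ ≤ 1 - (1 - c) := by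
    nlinarith [norm_nonneg (z - (1 - c : ℝ)), one_le_pow₀ (n := n) hz]
  exact hz1 (Complex.eq_one_of_one_le_norm_of_norm_sub_ofReal_le hz (by linarith) hnear)

theorem stmt7_general (p : ℝ) (hp0 : 0 < p) (hp1 : p < 1) (l : ℕ) :
    ∀ lam : ℂ,
      lam ^ (l - 1) + (p : ℂ) * ∑ i ∈ Finset.range (l - 1), lam ^ i = 0 →
        ‖lam‖ < 1 :=
  fun _ => norm_lt_one_of_pow_add_mul_geom_sum_eq_zero hp0 hp1

/-- Fix `p` with `0 < p < 1` and an integer `l ≥ 2`.  Every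
root of `λ^{l−1} + p·(λ^{l−2} + ⋯ + λ + 1)` lies strictly inside the unit
disk: if `λ ∈ ℂ` satisfies `λ^{l−1} + p·Σ_{i=0}^{l−2} λ^i = 0`, then
`|λ| < 1`. -/
theorem stmt7 (p : ℝ) (hp0 : 0 < p) (hp1 : p < 1) (l : ℕ) (hl : 2 ≤ l) :
    ∀ lam : ℂ,
      lam ^ (l - 1) + (p : ℂ) * ∑ i ∈ Finset.range (l - 1), lam ^ i = 0 →
        ‖lam‖ < 1 :=
  stmt7_general p hp0 hp1 l
end
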